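/- The second σ-derivative of the at-the-money Inverse-option Black–Scholes price admits the closed form: for all τ > 0, x ∈ ℝ and σ > 0, ∂²_{σσ} BS(τ,x,x,σ) = (11/4) σ τ^{3/2} e^{−σ²τ/8} / √(2π) − τ (1 + 2σ²τ) e^{σ²τ} Erfc(3σ√τ/(2√2)). -/

import Mathlib

open Real MeasureTheory Set Filter

/-- Standard normal CDF `N(z) = (2π)^{-1/2} ∫_{-∞}^z e^{-t²/2} dt`. -/
noncomputable def Ncdf (z : ℝ) : ℝ :=
  (Real.sqrt (2 * Real.pi))⁻¹ * ∫ t in Set.Iic z, Real.exp (-t ^ 2 / 2)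

/-- Standard normal density `φ(z) = (2π)^{-1/2} e^{-z²/2}`. -/
noncomputable def phi (z : ℝ) : ℝ :=
  (Real.sqrt (2 * Real.pi))⁻¹ * Real.exp (-z ^ 2 / 2)

/-- `d₂ = (x-k)/(σ√τ) - σ√τ/2`. -/
noncomputable def d2 (τ x k σ : ℝ) : ℝ :=
  (x - k) / (σ * Real.sqrt τ) - σ * Real.sqrt τ / 2

/-- `d₁ = d₂ - σ√τ`. -/
noncomputable def d1 (τ x k σ : ℝ) : ℝ :=
  d2 τ x k σ - σ * Real.sqrt τ

/-- Black–Scholes price of an Inverse European call: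
`BS(τ,x,k,σ) = N(d₂) - e^{σ²τ + k - x} N(d₁)`. -/
noncomputable def BS (τ x k σ : ℝ) : ℝ :=
  Ncdf (d2 τ x k σ) - Real.exp (σ ^ 2 * τ + k - x) * Ncdf (d1 τ x k σ)

/-- Complementary error function `Erfc(z) = (2/√π) ∫_z^∞ e^{-t²} dt`. -/
noncomputable def Erfc (z : ℝ) : ℝ :=
  2 / Real.sqrt Real.pi * ∫ t in Set.Ioi z, Real.exp (-t ^ 2)

/-- `H(τ,x,k,σ) = ½ (∂³ₓₓₓ BS - ∂²ₓₓ BS)(τ,x,k,σ)`. -/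
noncomputable def Hfun (τ x k σ : ℝ) : ℝ :=
  (1 / 2) * (iteratedDeriv 3 (fun x' => BS τ x' k σ) x
    - iteratedDeriv 2 (fun x' => BS τ x' k σ) x)

/-- `G(τ,x,k,σ) = ∂ₖ H(τ,x,k,σ) - H(τ,x,k,σ)`. -/
noncomputable def Gfun (τ x k σ : ℝ) : ℝ :=
  deriv (fun k' => Hfun τ x k' σ) k - Hfun τ x k σ

lemma gauss_cont : Continuous (fun t : ℝ => Real.exp (-t ^ 2 / 2)) := by
  continuity

lemma gauss_int : Integrable (fun t : ℝ => Real.exp (-t ^ 2 / 2)) := by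
  have := integrable_exp_neg_mul_sq (b := (1/2 : ℝ)) (by norm_num)
  convert this using 2 with t
  ring_nf

lemma hasDerivAt_Ncdf (z : ℝ) : HasDerivAt Ncdf (phi z) z := by
  have key : ∀ w : ℝ, Ncdf w
      = Ncdf 0 + (Real.sqrt (2 * Real.pi))⁻¹ * ∫ t in (0:ℝ)..w, Real.exp (-t ^ 2 / 2) := by
    intro w
    rw [← intervalIntegral.integral_Iic_sub_Iic gauss_int.integrableOn gauss_int.integrableOn]
    unfold Ncdf; ring
  have h1 : HasDerivAt (fun w => ∫ t in (0:ℝ)..w, Real.exp (-t ^ 2 / 2))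
      (Real.exp (-z ^ 2 / 2)) z :=
    intervalIntegral.integral_hasDerivAt_right gauss_int.intervalIntegrable
      (gauss_cont.stronglyMeasurableAtFilter _ _) gauss_cont.continuousAt
  have h2 := ((h1.const_mul ((Real.sqrt (2 * Real.pi))⁻¹)).const_add (Ncdf 0))
  have : (fun w => Ncdf 0 + (Real.sqrt (2 * Real.pi))⁻¹ * ∫ t in (0:ℝ)..w,
      Real.exp (-t ^ 2 / 2)) = Ncdf := funext fun w => (key w).symm
  rw [this] at h2
  exact h2

lemma phi_neg (z : ℝ) : phi (-z) = phi z := by simp [phi]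

lemma hasDerivAt_phi (z : ℝ) : HasDerivAt phi (-z * phi z) z := by
  have h : HasDerivAt (fun z : ℝ => -z ^ 2 / 2) (-z) z := by
    have := ((hasDerivAt_pow 2 z).neg).div_const 2
    exact this.congr_deriv (by ring)
  have := (h.exp.const_mul ((Real.sqrt (2 * Real.pi))⁻¹))
  exact this.congr_deriv (by unfold phi; ring)

lemma Ncdf_neg (a : ℝ) : Ncdf (-a) = (1/2) * Erfc (a / Real.sqrt 2) := by
  unfold Ncdf Erfc
  have h1 : (∫ t in Set.Iic (-a), Real.exp (-t ^ 2 / 2))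
      = ∫ t in Set.Ioi a, Real.exp (-t ^ 2 / 2) := by
    rw [← integral_comp_neg_Ioi]
    simp
  have h2 : (∫ t in Set.Ioi a, Real.exp (-t ^ 2 / 2))
      = Real.sqrt 2 * ∫ t in Set.Ioi (a / Real.sqrt 2), Real.exp (-t ^ 2) := by
    have hb : (0:ℝ) < (Real.sqrt 2)⁻¹ := by positivity
    have := integral_comp_mul_left_Ioi (fun y => Real.exp (-y ^ 2)) a hb
    simp only [smul_eq_mul, inv_inv] at this
    have harg : ∀ t : ℝ, Real.exp (-((Real.sqrt 2)⁻¹ * t) ^ 2) = Real.exp (-t ^ 2 / 2) := by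
      intro t
      rw [mul_pow, inv_pow, Real.sq_sqrt (by norm_num : (0:ℝ) ≤ 2)]
      ring_nf
    simp only [harg] at this
    rw [this]
    rw [div_eq_inv_mul]
  rw [h1, h2]
  have hpi : Real.sqrt (2 * Real.pi) = Real.sqrt 2 * Real.sqrt Real.pi :=
    Real.sqrt_mul (by norm_num) _
  rw [hpi]
  have h2pos : (0:ℝ) < Real.sqrt 2 := by positivity
  have hppos : (0:ℝ) < Real.sqrt Real.pi := Real.sqrt_pos.mpr Real.pi_pos
  field_simp

lemma BS_atm (τ x σ' : ℝ) :
    BS τ x x σ' = Ncdf (-(σ' * Real.sqrt τ) / 2)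
      - Real.exp (σ' ^ 2 * τ) * Ncdf (-(3 * (σ' * Real.sqrt τ)) / 2) := by
  have h2 : d2 τ x x σ' = -(σ' * Real.sqrt τ) / 2 := by
    unfold d2; rw [sub_self, zero_div]; ring
  have h1 : d1 τ x x σ' = -(3 * (σ' * Real.sqrt τ)) / 2 := by
    unfold d1; rw [h2]; ring
  unfold BS
  rw [h1, h2]
  ring_nf

/-- key exponential identity -/
lemma exp_phi_key (τ s : ℝ) (hτ : 0 ≤ τ) :
    Real.exp (s ^ 2 * τ) * phi (3 * (s * Real.sqrt τ) / 2) = phi (s * Real.sqrt τ / 2) := by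
  have h : Real.sqrt τ ^ 2 = τ := Real.sq_sqrt hτ
  unfold phi
  rw [mul_left_comm, ← Real.exp_add]
  congr 2
  linear_combination (-(s ^ 2)) * h

lemma hasDerivAt_BS_atm (τ x : ℝ) (hτ : 0 ≤ τ) (s : ℝ) :
    HasDerivAt (fun σ' => BS τ x x σ')
      (Real.sqrt τ * phi (s * Real.sqrt τ / 2)
        - 2 * s * τ * Real.exp (s ^ 2 * τ) * Ncdf (-(3 * (s * Real.sqrt τ)) / 2)) s := by
  have hA : HasDerivAt (fun s : ℝ => -(s * Real.sqrt τ) / 2) (-Real.sqrt τ / 2) s := by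
    have := ((hasDerivAt_id s).mul_const (Real.sqrt τ)).neg.div_const 2
    simpa using this
  have hB : HasDerivAt (fun s : ℝ => -(3 * (s * Real.sqrt τ)) / 2)
      (-(3 * Real.sqrt τ) / 2) s := by
    have := (((hasDerivAt_id s).mul_const (Real.sqrt τ)).const_mul 3).neg.div_const 2
    simpa using this
  have h2 : HasDerivAt (fun s : ℝ => Ncdf (-(s * Real.sqrt τ) / 2))
      (phi (-(s * Real.sqrt τ) / 2) * (-Real.sqrt τ / 2)) s :=
    (hasDerivAt_Ncdf _).comp s hA
  have h3 : HasDerivAt (fun s : ℝ => Real.exp (s ^ 2 * τ))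
      (Real.exp (s ^ 2 * τ) * (2 * s * τ)) s := by
    have := ((hasDerivAt_pow 2 s).mul_const τ).exp
    convert this using 1; ring
  have h4 : HasDerivAt (fun s : ℝ => Ncdf (-(3 * (s * Real.sqrt τ)) / 2))
      (phi (-(3 * (s * Real.sqrt τ)) / 2) * (-(3 * Real.sqrt τ) / 2)) s :=
    (hasDerivAt_Ncdf _).comp s hB
  have h5 := h2.sub (h3.mul h4)
  have heq : (fun s => Ncdf (-(s * Real.sqrt τ) / 2)
      - Real.exp (s ^ 2 * τ) * Ncdf (-(3 * (s * Real.sqrt τ)) / 2))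
      = fun σ' => BS τ x x σ' := funext fun s => (BS_atm τ x s).symm
  rw [← heq]
  refine h5.congr_deriv ?_
  symm
  rw [show (-(s * Real.sqrt τ) / 2) = -(s * Real.sqrt τ / 2) by ring,
    show (-(3 * (s * Real.sqrt τ)) / 2) = -(3 * (s * Real.sqrt τ) / 2) by ring]
  rw [phi_neg, phi_neg]
  have key := exp_phi_key τ s hτ
  linear_combination (-(3 * Real.sqrt τ) / 2) * key

lemma hasDerivAt_deriv_BS_atm (τ x : ℝ) (hτ : 0 ≤ τ) (s : ℝ) :
    HasDerivAt (fun s : ℝ => Real.sqrt τ * phi (s * Real.sqrt τ / 2)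
        - 2 * s * τ * Real.exp (s ^ 2 * τ) * Ncdf (-(3 * (s * Real.sqrt τ)) / 2))
      ((11 / 4) * s * (τ * Real.sqrt τ) * phi (s * Real.sqrt τ / 2)
        - 2 * τ * (1 + 2 * s ^ 2 * τ) * Real.exp (s ^ 2 * τ)
          * Ncdf (-(3 * (s * Real.sqrt τ)) / 2)) s := by
  have h : Real.sqrt τ ^ 2 = τ := Real.sq_sqrt hτ
  have hI : HasDerivAt (fun s : ℝ => s * Real.sqrt τ / 2) (Real.sqrt τ / 2) s := by
    have := ((hasDerivAt_id s).mul_const (Real.sqrt τ)).div_const 2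
    simpa using this
  have hB : HasDerivAt (fun s : ℝ => -(3 * (s * Real.sqrt τ)) / 2)
      (-(3 * Real.sqrt τ) / 2) s := by
    have := (((hasDerivAt_id s).mul_const (Real.sqrt τ)).const_mul 3).neg.div_const 2
    simpa using this
  have h1 : HasDerivAt (fun s : ℝ => Real.sqrt τ * phi (s * Real.sqrt τ / 2))
      (Real.sqrt τ * (-(s * Real.sqrt τ / 2) * phi (s * Real.sqrt τ / 2)
        * (Real.sqrt τ / 2))) s := by
    have := ((hasDerivAt_phi (s * Real.sqrt τ / 2)).comp s hI).const_mul (Real.sqrt τ)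
    exact this.congr_deriv (by ring)
  have h3 : HasDerivAt (fun s : ℝ => Real.exp (s ^ 2 * τ))
      (Real.exp (s ^ 2 * τ) * (2 * s * τ)) s := by
    have := ((hasDerivAt_pow 2 s).mul_const τ).exp
    convert this using 1; ring
  have h4 : HasDerivAt (fun s : ℝ => Ncdf (-(3 * (s * Real.sqrt τ)) / 2))
      (phi (-(3 * (s * Real.sqrt τ)) / 2) * (-(3 * Real.sqrt τ) / 2)) s :=
    (hasDerivAt_Ncdf _).comp s hB
  have hP : HasDerivAt (fun s : ℝ => 2 * s * τ) (2 * τ) s := by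
    have := ((hasDerivAt_id s).const_mul 2).mul_const τ
    simpa using this
  have h5 := h1.sub (hP.mul (h3.mul h4))
  have hfe : (fun s : ℝ => Real.sqrt τ * phi (s * Real.sqrt τ / 2)
      - 2 * s * τ * Real.exp (s ^ 2 * τ) * Ncdf (-(3 * (s * Real.sqrt τ)) / 2))
      = fun s : ℝ => Real.sqrt τ * phi (s * Real.sqrt τ / 2)
        - 2 * s * τ * (Real.exp (s ^ 2 * τ) * Ncdf (-(3 * (s * Real.sqrt τ)) / 2)) := by
    funext u; ring
  rw [hfe]
  refine h5.congr_deriv ?_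
  symm
  simp only [Pi.mul_apply]
  rw [show (-(3 * (s * Real.sqrt τ)) / 2) = -(3 * (s * Real.sqrt τ) / 2) by ring, phi_neg]
  have key := exp_phi_key τ s hτ
  rw [show (-(3 * (s * Real.sqrt τ) / 2)) = (-(3 * (s * Real.sqrt τ)) / 2) by ring]
  linear_combination (s * Real.sqrt τ / 4 * phi (s * Real.sqrt τ / 2)) * h
    + (-(3 * s * τ * Real.sqrt τ)) * key


/-- closed form of the second σ-derivative of the at-the-money
Inverse call price. -/
theorem stmt_10 (τ x σ : ℝ) (hτ : 0 < τ) (hσ : 0 < σ) :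
    iteratedDeriv 2 (fun σ' => BS τ x x σ') σ
      = (11 / 4) * σ * (τ * Real.sqrt τ) * Real.exp (-(σ ^ 2 * τ) / 8)
          / Real.sqrt (2 * Real.pi)
        - τ * (1 + 2 * σ ^ 2 * τ) * Real.exp (σ ^ 2 * τ)
          * Erfc (3 * σ * Real.sqrt τ / (2 * Real.sqrt 2)) := by
  have h : Real.sqrt τ ^ 2 = τ := Real.sq_sqrt hτ.le
  rw [iteratedDeriv_succ, iteratedDeriv_one]
  have hg : deriv (fun σ' => BS τ x x σ')
      = fun s : ℝ => Real.sqrt τ * phi (s * Real.sqrt τ / 2)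
        - 2 * s * τ * Real.exp (s ^ 2 * τ) * Ncdf (-(3 * (s * Real.sqrt τ)) / 2) :=
    funext fun s => (hasDerivAt_BS_atm τ x hτ.le s).deriv
  rw [hg, (hasDerivAt_deriv_BS_atm τ x hτ.le σ).deriv]
  rw [show (-(3 * (σ * Real.sqrt τ)) / 2) = -(3 * (σ * Real.sqrt τ) / 2) by ring,
    Ncdf_neg, show (3 * (σ * Real.sqrt τ) / 2) / Real.sqrt 2
      = 3 * σ * Real.sqrt τ / (2 * Real.sqrt 2) by ring]
  have hexp : Real.exp (-(σ * Real.sqrt τ / 2) ^ 2 / 2) = Real.exp (-(σ ^ 2 * τ) / 8) := by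
    congr 1
    linear_combination (-(σ ^ 2) / 8) * h
  unfold phi
  rw [hexp]
  field_simp
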